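/- Let Γ be the subgroup of G generated by (e₁,0), (e₂,0), (e₃,0), where e₁, e₂, e₃ is the standard basis of ℝ³. Then the projection π(x,x*) = x maps Γ onto ℤ³, and Γ ∩ ({0} × ℝ³) = {0} × ℤ³; thus Γ is a central extension 0 → ℤ³ → Γ → ℤ³ → 0. -/

import Mathlib

/-- The product `(x,x*)·(y,y*) = (x+y, x* + y* + ½ x×y)` on `G = ℝ³ × ℝ³`. -/
noncomputable def heisMul (a b : (Fin 3 → ℝ) × (Fin 3 → ℝ)) :
    (Fin 3 → ℝ) × (Fin 3 → ℝ) :=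
  (a.1 + b.1, a.2 + b.2 + (1/2 : ℝ) • crossProduct a.1 b.1)

/-- Membership in the subgroup of `G` generated by a set `S` (with respect to `heisMul`). -/
inductive heisGen (S : Set ((Fin 3 → ℝ) × (Fin 3 → ℝ))) :
    (Fin 3 → ℝ) × (Fin 3 → ℝ) → Prop
  | base {a} : a ∈ S → heisGen S a
  | one : heisGen S 0
  | mul {a b} : heisGen S a → heisGen S b → heisGen S (heisMul a b)
  | inv {a} : heisGen S a → heisGen S (-a.1, -a.2)

/-- The generators `(e₁,0), (e₂,0), (e₃,0)` of `Γ`. -/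
noncomputable def heisGenerators : Set ((Fin 3 → ℝ) × (Fin 3 → ℝ)) :=
  {a | ∃ i : Fin 3, a = (Pi.single i 1, 0)}

/-!
The commutator of `(u,·)` and `(v,·)` is `(0, u × v)`, and `eᵢ = eᵢ₊₁ × eᵢ₊₂`, so `Γ` contains
`{0} × ℤ³`; the projection of `Γ` is an additive group containing the `eᵢ`, hence all of `ℤ³`.
Conversely, every element of `Γ` has the form `(m, ½(m₂m₃, m₃m₁, m₁m₂) + n)` with `m, n ∈ ℤ³`:
this shape is preserved by products, since `x × y` and the polarisation of `m ↦ m₂m₃` differ by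
twice an integer vector. An element with `m = 0` therefore has integral second coordinate.
-/

open Matrix

lemma crossProduct_apply (u v : Fin 3 → ℝ) (i : Fin 3) :
    (u ⨯₃ v) i = u (i + 1) * v (i + 2) - u (i + 2) * v (i + 1) := by
  fin_cases i <;> simp [cross_apply]

lemma crossProduct_single_single (i : Fin 3) :
    (Pi.single (i + 1) 1 : Fin 3 → ℝ) ⨯₃ Pi.single (i + 2) 1 = Pi.single i 1 := by
  ext j
  fin_cases i <;> fin_cases j <;> simp [cross_apply]

lemma AddSubgroup.mem_of_forall_intCast {ι : Type*} [Fintype ι] [DecidableEq ι]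
    {P : AddSubgroup (ι → ℝ)} (hP : ∀ i, Pi.single i 1 ∈ P) {u : ι → ℝ}
    (hu : ∀ i, ∃ k : ℤ, u i = k) : u ∈ P := by
  choose k hk using hu
  rw [pi_eq_sum_univ' u]
  refine P.sum_mem fun i _ => ?_
  rw [hk i, Int.cast_smul_eq_zsmul]
  exact P.zsmul_mem (hP i) (k i)

lemma heisMul_commutator (a b : (Fin 3 → ℝ) × (Fin 3 → ℝ)) :
    heisMul (heisMul (heisMul a b) (-a.1, -a.2)) (-b.1, -b.2) = (0, a.1 ⨯₃ b.1) := by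
  ext i <;> simp [heisMul, crossProduct_apply]
  ring

namespace heisGen

variable {S : Set ((Fin 3 → ℝ) × (Fin 3 → ℝ))}

lemma commutator {a b : (Fin 3 → ℝ) × (Fin 3 → ℝ)} (ha : heisGen S a) (hb : heisGen S b) :
    heisGen S (0, a.1 ⨯₃ b.1) :=
  heisMul_commutator a b ▸ ((ha.mul hb).mul ha.inv).mul hb.inv

variable (S) in
def fstAddSubgroup : AddSubgroup (Fin 3 → ℝ) where
  carrier := Prod.fst '' {a | heisGen S a}
  zero_mem' := ⟨0, one, rfl⟩
  add_mem' := by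
    rintro _ _ ⟨a, ha, rfl⟩ ⟨b, hb, rfl⟩
    exact ⟨heisMul a b, mul ha hb, rfl⟩
  neg_mem' := by
    rintro _ ⟨a, ha, rfl⟩
    exact ⟨(-a.1, -a.2), inv ha, rfl⟩

variable (S) in
def centerAddSubgroup : AddSubgroup (Fin 3 → ℝ) where
  carrier := {w | heisGen S (0, w)}
  zero_mem' := one
  add_mem' {v w} hv hw := by
    simpa [heisMul] using mul hv hw
  neg_mem' {w} hw := by
    simpa using inv hw

end heisGen

def IsHeisLatticePoint (a : (Fin 3 → ℝ) × (Fin 3 → ℝ)) : Prop :=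
  ∃ m n : Fin 3 → ℤ, ∀ i, a.1 i = m i ∧ a.2 i = m (i + 1) * m (i + 2) / 2 + n i

namespace IsHeisLatticePoint

lemma mul {a b : (Fin 3 → ℝ) × (Fin 3 → ℝ)} (ha : IsHeisLatticePoint a)
    (hb : IsHeisLatticePoint b) : IsHeisLatticePoint (heisMul a b) := by
  obtain ⟨ma, na, ha⟩ := ha
  obtain ⟨mb, nb, hb⟩ := hb
  refine ⟨ma + mb, fun i => na i + nb i - ma (i + 2) * mb (i + 1), fun i => ⟨?_, ?_⟩⟩
  · simp [heisMul, (ha i).1, (hb i).1]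
  · simp only [heisMul, Pi.add_apply, Pi.smul_apply, smul_eq_mul, crossProduct_apply,
      (ha _).1, (ha _).2, (hb _).1, (hb _).2]
    push_cast
    ring

lemma inv {a : (Fin 3 → ℝ) × (Fin 3 → ℝ)} (ha : IsHeisLatticePoint a) :
    IsHeisLatticePoint (-a.1, -a.2) := by
  obtain ⟨m, n, ha⟩ := ha
  refine ⟨-m, fun i => -n i - m (i + 1) * m (i + 2), fun i => ⟨?_, ?_⟩⟩
  · simp [(ha i).1]
  · simp only [Pi.neg_apply, (ha i).2]
    push_cast
    ring

lemma single (i : Fin 3) : IsHeisLatticePoint (Pi.single i 1, 0) := by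
  refine ⟨Pi.single i 1, 0, fun j => ⟨by simp [Pi.single_apply], ?_⟩⟩
  fin_cases i <;> fin_cases j <;> simp

lemma snd_intCast_of_fst_eq_zero {w : Fin 3 → ℝ} (h : IsHeisLatticePoint (0, w)) (i : Fin 3) :
    ∃ k : ℤ, w i = k := by
  obtain ⟨m, n, hmn⟩ := h
  have hm : (m (i + 1) : ℝ) = 0 := by simpa using ((hmn (i + 1)).1).symm
  exact ⟨n i, by simpa [hm] using (hmn i).2⟩

end IsHeisLatticePoint

lemma heisGen.isHeisLatticePoint {a : (Fin 3 → ℝ) × (Fin 3 → ℝ)}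
    (h : heisGen heisGenerators a) : IsHeisLatticePoint a := by
  induction h with
  | base h => obtain ⟨i, rfl⟩ := h; exact .single i
  | one => exact ⟨0, 0, by simp⟩
  | mul _ _ iha ihb => exact iha.mul ihb
  | inv _ iha => exact iha.inv

/-- For the subgroup `Γ ⊆ G` generated by `(e₁,0), (e₂,0), (e₃,0)`: the projection
`π(x,x*) = x` maps `Γ` onto `ℤ³`, and `Γ ∩ ({0} × ℝ³) = {0} × ℤ³`; thus `Γ` is a central
extension `0 → ℤ³ → Γ → ℤ³ → 0`. -/
theorem heisGamma_central_extension :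
    (Prod.fst '' {a | heisGen heisGenerators a}
        = {u : Fin 3 → ℝ | ∀ i, ∃ k : ℤ, u i = (k : ℝ)}) ∧
    ({a | heisGen heisGenerators a} ∩ {a : (Fin 3 → ℝ) × (Fin 3 → ℝ) | a.1 = 0}
        = {a : (Fin 3 → ℝ) × (Fin 3 → ℝ) | a.1 = 0 ∧ ∀ i, ∃ k : ℤ, a.2 i = (k : ℝ)}) := by
  have generator (i : Fin 3) : heisGen heisGenerators (Pi.single i 1, 0) := .base ⟨i, rfl⟩
  constructor
  · ext u
    refine ⟨?_, fun hu => AddSubgroup.mem_of_forall_intCast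
      (P := heisGen.fstAddSubgroup _) (fun i => ⟨_, generator i, rfl⟩) hu⟩
    rintro ⟨a, ha, rfl⟩ i
    obtain ⟨m, _, hm⟩ := ha.isHeisLatticePoint
    exact ⟨m i, (hm i).1⟩
  · ext ⟨x, w⟩
    constructor
    · rintro ⟨ha, rfl⟩
      exact ⟨rfl, ha.isHeisLatticePoint.snd_intCast_of_fst_eq_zero⟩
    · rintro ⟨rfl, hw⟩
      refine ⟨AddSubgroup.mem_of_forall_intCast (P := heisGen.centerAddSubgroup _)
        (fun i => ?_) hw, rfl⟩
      show heisGen _ (0, _)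
      simpa [crossProduct_single_single] using (generator (i + 1)).commutator (generator (i + 2))
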